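/- The rank-k numerical radius fails the power inequality: there exists a 4×4 complex matrix A with r_2(A²) > (r_2(A))², where r_2 denotes the rank-2 numerical radius. (In contrast, the classical numerical radius satisfies r(A^m) ≤ r(A)^m.) -/

import Mathlib

open Matrix

noncomputable section

/-- The classical numerical range F(B) = {x* B x : x* x = 1}. -/
def numRange {m : ℕ} (B : Matrix (Fin m) (Fin m) ℂ) : Set ℂ :=
  {z | ∃ x : Fin m → ℂ, star x ⬝ᵥ x = 1 ∧ z = star x ⬝ᵥ B.mulVec x}

/-- The rank-k numerical range Λ_k(A). -/
def rankNumRange {n : ℕ} (A : Matrix (Fin n) (Fin n) ℂ) (k : ℕ) : Set ℂ :=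
  {l | ∃ X : Matrix (Fin n) (Fin k) ℂ, Xᴴ * X = 1 ∧ Xᴴ * A * X = l • 1}

/-- The rank-k numerical radius r_k(A) = sup { |z| : z ∈ Λ_k(A) }. -/
def rankNumRadius {n : ℕ} (A : Matrix (Fin n) (Fin n) ℂ) (k : ℕ) : ℝ :=
  sSup ((fun z : ℂ => ‖z‖) '' rankNumRange A k)

/-!
Take `A = diag(1, -1, i, -i)`. If `X*AX = λI₂` with `X*X = I₂`, then for every coordinate `j` the
column space of `X` contains a nonzero `u` with `u j = 0`, and `u*Au = λ u*u` exhibits `λ` as a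
convex combination of the diagonal entries other than the `j`-th. The four triangles obtained this
way meet only at `0`, which is attained, so `Λ₂(A) = {0}` and `r₂(A) = 0`. On the other hand
`A² = diag(1, 1, -1, -1)` compresses to `-I₂` on the last two coordinates, so `r₂(A²) ≥ 1`.
-/

open Complex

lemma star_mulVec_dotProduct_mulVec_mulVec {m n R : Type*} [Fintype m] [Fintype n]
    [CommSemiring R] [StarRing R] (X : Matrix m n R) (A : Matrix m m R) (v : n → R) :
    star (X *ᵥ v) ⬝ᵥ A *ᵥ X *ᵥ v = star v ⬝ᵥ (Xᴴ * A * X) *ᵥ v := by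
  rw [star_mulVec, dotProduct_mulVec, dotProduct_mulVec, vecMul_vecMul, vecMul_vecMul,
    ← dotProduct_mulVec, Matrix.mul_assoc]

lemma exists_ne_zero_apply_eq_zero_of_mem_rankNumRange_two {n : ℕ}
    {A : Matrix (Fin n) (Fin n) ℂ} {l : ℂ} (hl : l ∈ rankNumRange A 2) (j : Fin n) :
    ∃ u : Fin n → ℂ, u ≠ 0 ∧ u j = 0 ∧ star u ⬝ᵥ A *ᵥ u = l * (star u ⬝ᵥ u) := by
  obtain ⟨X, hXX, hXAX⟩ := hl
  have hv : ∃ v : Fin 2 → ℂ, v ≠ 0 ∧ (X *ᵥ v) j = 0 := by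
    by_cases h : X j 0 = 0 ∧ X j 1 = 0
    · exact ⟨![1, 0], by simp [funext_iff], by simp [mulVec, dotProduct, h.1]⟩
    · refine ⟨![X j 1, -X j 0], fun hv ↦ h ?_, ?_⟩
      · simpa [funext_iff, and_comm] using hv
      · simp only [mulVec, dotProduct, Fin.sum_univ_two, cons_val_zero, cons_val_one,
          cons_val_fin_one]
        ring
  obtain ⟨v, hv0, hvj⟩ := hv
  have hnorm : star (X *ᵥ v) ⬝ᵥ X *ᵥ v = star v ⬝ᵥ v := by
    simpa [hXX] using star_mulVec_dotProduct_mulVec_mulVec X 1 v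
  refine ⟨X *ᵥ v, fun hu ↦ hv0 ?_, hvj, ?_⟩
  · rw [← one_mulVec v, ← hXX, ← mulVec_mulVec, hu, mulVec_zero]
  · rw [star_mulVec_dotProduct_mulVec_mulVec, hXAX, hnorm, smul_mulVec, one_mulVec,
      dotProduct_smul, smul_eq_mul]

section Diagonal

variable {ι : Type*} [Fintype ι] [DecidableEq ι]

lemma star_dotProduct_diagonal_mulVec (d u : ι → ℂ) :
    star u ⬝ᵥ diagonal d *ᵥ u = ∑ i, d i * (‖u i‖ ^ 2 : ℝ) := by
  simp only [dotProduct, mulVec_diagonal, Pi.star_apply, RCLike.star_def]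
  refine Finset.sum_congr rfl fun i _ ↦ ?_
  push_cast
  rw [← conj_mul']
  ring

lemma star_dotProduct_self_eq_sum_norm_sq (u : ι → ℂ) :
    star u ⬝ᵥ u = ((∑ i, ‖u i‖ ^ 2 : ℝ) : ℂ) := by
  simpa using star_dotProduct_diagonal_mulVec 1 u

end Diagonal

lemma re_mul_nonneg_of_mem_rankNumRange_two_diagonal {n : ℕ} {d : Fin n → ℂ} {l w : ℂ}
    (hl : l ∈ rankNumRange (diagonal d) 2) (j : Fin n) (hd : ∀ i ≠ j, 0 ≤ (w * d i).re) :
    0 ≤ (w * l).re := by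
  obtain ⟨u, hu0, huj, hu⟩ := exists_ne_zero_apply_eq_zero_of_mem_rankNumRange_two hl j
  rw [star_dotProduct_diagonal_mulVec, star_dotProduct_self_eq_sum_norm_sq] at hu
  have hpos : 0 < ∑ i, ‖u i‖ ^ 2 := by
    obtain ⟨i, hi⟩ := Function.ne_iff.mp hu0
    exact Finset.sum_pos' (fun _ _ ↦ by positivity) ⟨i, Finset.mem_univ i, by positivity⟩
  have hre : ∑ i, (w * d i).re * ‖u i‖ ^ 2 = (w * l).re * ∑ i, ‖u i‖ ^ 2 := by
    rw [← re_mul_ofReal, mul_assoc, ← hu, Finset.mul_sum, re_sum]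
    simp only [← mul_assoc, re_mul_ofReal]
  refine nonneg_of_mul_nonneg_left (hre ▸ Finset.sum_nonneg fun i _ ↦ ?_) hpos
  rcases eq_or_ne i j with rfl | hij
  · simp [huj]
  · exact mul_nonneg (hd i hij) (sq_nonneg _)

lemma mem_numRange_of_mem_rankNumRange {n k : ℕ} {A : Matrix (Fin n) (Fin n) ℂ} {l : ℂ}
    (hk : 0 < k) (hl : l ∈ rankNumRange A k) : l ∈ numRange A := by
  obtain ⟨X, hXX, hXAX⟩ := hl
  set e : Fin k → ℂ := Pi.single ⟨0, hk⟩ 1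
  have he : ∀ M : Matrix (Fin k) (Fin k) ℂ, star e ⬝ᵥ M *ᵥ e = M ⟨0, hk⟩ ⟨0, hk⟩ := by
    intro M
    simp [e]
  refine ⟨X *ᵥ e, ?_, ?_⟩
  · have := star_mulVec_dotProduct_mulVec_mulVec X 1 e
    rwa [one_mulVec, Matrix.mul_one, hXX, he, one_apply_eq] at this
  · rw [star_mulVec_dotProduct_mulVec_mulVec, hXAX, he]
    simp

lemma norm_le_of_mem_numRange_diagonal {n : ℕ} {d : Fin n → ℂ} {c : ℝ} {z : ℂ}
    (hd : ∀ i, ‖d i‖ ≤ c) (hz : z ∈ numRange (diagonal d)) : ‖z‖ ≤ c := by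
  obtain ⟨x, hx, rfl⟩ := hz
  have hx' : ∑ i, ‖x i‖ ^ 2 = 1 := by
    exact_mod_cast (star_dotProduct_self_eq_sum_norm_sq x).symm.trans hx
  calc ‖star x ⬝ᵥ diagonal d *ᵥ x‖ = ‖∑ i, d i * (‖x i‖ ^ 2 : ℝ)‖ := by
        rw [star_dotProduct_diagonal_mulVec]
    _ ≤ ∑ i, ‖d i‖ * ‖x i‖ ^ 2 := by
        refine (norm_sum_le _ _).trans_eq (Finset.sum_congr rfl fun i _ ↦ ?_)
        rw [norm_mul, norm_real, Real.norm_of_nonneg (by positivity)]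
    _ ≤ ∑ i, c * ‖x i‖ ^ 2 := by gcongr; exact hd _
    _ = c := by rw [← Finset.mul_sum, hx', mul_one]

lemma norm_le_rankNumRadius {n k : ℕ} {A : Matrix (Fin n) (Fin n) ℂ} {c : ℝ} {l : ℂ}
    (hA : ∀ z ∈ rankNumRange A k, ‖z‖ ≤ c) (hl : l ∈ rankNumRange A k) :
    ‖l‖ ≤ rankNumRadius A k :=
  le_csSup ⟨c, Set.forall_mem_image.mpr hA⟩ (Set.mem_image_of_mem _ hl)

lemma rankNumRange_two_diagonal_one_neg_one_I_neg_I :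
    rankNumRange (diagonal ![1, -1, I, -I]) 2 = {0} := by
  refine Set.Subset.antisymm (fun l hl ↦ ?_) (Set.singleton_subset_iff.mpr ?_)
  · have hre : 0 ≤ l.re := by
      simpa using re_mul_nonneg_of_mem_rankNumRange_two_diagonal (w := 1) hl 1 (by
        intro i hi; fin_cases i <;> simp at hi ⊢)
    have hre' : 0 ≤ -l.re := by
      simpa using re_mul_nonneg_of_mem_rankNumRange_two_diagonal (w := -1) hl 0 (by
        intro i hi; fin_cases i <;> simp at hi ⊢)
    have him : 0 ≤ l.im := by
      simpa using re_mul_nonneg_of_mem_rankNumRange_two_diagonal (w := -I) hl 3 (by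
        intro i hi; fin_cases i <;> simp at hi ⊢)
    have him' : 0 ≤ -l.im := by
      simpa using re_mul_nonneg_of_mem_rankNumRange_two_diagonal (w := I) hl 2 (by
        intro i hi; fin_cases i <;> simp at hi ⊢)
    exact Complex.ext (by simp only [zero_re]; linarith) (by simp only [zero_im]; linarith)
  · refine ⟨!![1/2, 1/2; 1/2, 1/2; 1/2, -1/2; 1/2, -1/2], ?_, ?_⟩ <;>
    · ext i j
      fin_cases i <;> fin_cases j <;> simp [Matrix.mul_apply, Fin.sum_univ_four, map_ofNat] <;>
        norm_num

lemma one_le_rankNumRadius_two_diagonal_one_one_neg_one_neg_one :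
    1 ≤ rankNumRadius (diagonal ![(1 : ℂ), 1, -1, -1]) 2 := by
  have hmem : (-1 : ℂ) ∈ rankNumRange (diagonal ![1, 1, -1, -1]) 2 := by
    refine ⟨!![0, 0; 0, 0; 1, 0; 0, 1], ?_, ?_⟩ <;>
    · ext i j
      fin_cases i <;> fin_cases j <;> simp [Matrix.mul_apply, Fin.sum_univ_four]
  have hbound : ∀ z ∈ rankNumRange (diagonal ![(1 : ℂ), 1, -1, -1]) 2, ‖z‖ ≤ 1 :=
    fun z hz ↦ norm_le_of_mem_numRange_diagonal (fun i ↦ by fin_cases i <;> simp)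
      (mem_numRange_of_mem_rankNumRange two_pos hz)
  simpa using norm_le_rankNumRadius hbound hmem

theorem stmt_12 :
    ∃ A : Matrix (Fin 4) (Fin 4) ℂ,
      rankNumRadius (A * A) 2 > (rankNumRadius A 2) ^ 2 := by
  refine ⟨diagonal ![1, -1, I, -I], ?_⟩
  have hsq : diagonal ![1, -1, I, -I] * diagonal ![1, -1, I, -I] =
      diagonal ![(1 : ℂ), 1, -1, -1] := by
    rw [diagonal_mul_diagonal]
    congr 1
    ext i
    fin_cases i <;> simp
  have hA : rankNumRadius (diagonal ![1, -1, I, -I]) 2 = 0 := by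
    simp [rankNumRadius, rankNumRange_two_diagonal_one_neg_one_I_neg_I]
  rw [hsq, hA, zero_pow two_ne_zero]
  exact one_pos.trans_le one_le_rankNumRadius_two_diagonal_one_one_neg_one_neg_one
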